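/- arXiv:2403.00387 — 2 statements merged into one kernel-verified Lean document; each statement's English description precedes it below -/
import Mathlib

section
/- For every c > 0 there exist constants Δ > 0, k > 0, and μ > 0 such that every solution X of the time-delay system (S_c) whose initial segment satisfies ‖X0‖ ≤ Δ obeys |X(t)| ≤ k ‖X0‖ e^{−μ t} for all t ≥ 0. That is, the origin of (S_c) is locally exponentially stable. -/
open Set Matrix

/-- The matrix `A0`. -/
noncomputable def A0 : Matrix (Fin 2) (Fin 2) ℝ := !![-0.1, 0.5; -2, 0]

/-- The matrix `A1`. -/
noncomputable def A1 : Matrix (Fin 2) (Fin 2) ℝ := !![0, 2; -0.5, -0.1]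

/-- The saturation function `φ`. -/
noncomputable def phi (s : ℝ) : ℝ := if s < 0 then 0 else if s ≤ 1 then s else 1

/-- `ℝ²` with the Euclidean norm. -/
abbrev E2 : Type := EuclideanSpace ℝ (Fin 2)

/-- Action of a `2 × 2` matrix on `ℝ²`. -/
noncomputable def act (A : Matrix (Fin 2) (Fin 2) ℝ) (x : E2) : E2 :=
  Matrix.toEuclideanLin A x

/-- The nonlinearity `g(x,u) = (1+|x|²)(φ(u) A1 + (1-φ(u)) A0) x`. -/
noncomputable def gfun (x : E2) (u : ℝ) : E2 :=
  (1 + ‖x‖ ^ 2) • act (phi u • A1 + (1 - phi u) • A0) x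

/-- `X = (x, z1, z2) : [-2,∞) → ℝ² × ℝ × ℝ` is a solution of the time-delay system `(S_c)`. -/
def IsSolution (c : ℝ) (x : ℝ → E2) (z1 z2 : ℝ → ℝ) : Prop :=
  ContinuousOn x (Ici (-2 : ℝ)) ∧ ContinuousOn z1 (Ici (-2 : ℝ)) ∧
  ContinuousOn z2 (Ici (-2 : ℝ)) ∧
  ∀ t : ℝ, 0 < t →
    HasDerivAt x ((c * phi (z2 (t - 2))) • gfun (x t) (z1 (t - 1))
      + (c * (1 - phi (z2 (t - 2)))) • act A0 (x t)) t
    ∧ HasDerivAt z1 (-(z1 t)) t ∧ HasDerivAt z2 (-(z2 t)) t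

/-- Euclidean norm `|X(t)|` of the full state `(x(t), z1(t), z2(t)) ∈ ℝ⁴`. -/
noncomputable def Xnorm (x : ℝ → E2) (z1 z2 : ℝ → ℝ) (t : ℝ) : ℝ :=
  Real.sqrt (‖x t‖ ^ 2 + (z1 t) ^ 2 + (z2 t) ^ 2)

/-- Norm `‖X0‖ = sup_{τ ∈ [-2,0]} |X(τ)|` of the initial segment of a solution. -/
noncomputable def initNorm (x : ℝ → E2) (z1 z2 : ℝ → ℝ) : ℝ :=
  sSup (Xnorm x z1 z2 '' Icc (-2 : ℝ) 0)


/-!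
The quadratic form `lyap y = yᵀ P y` is a strict Lyapunov function for `A0`. The variables
`z1`, `z2` solve `ż = -z`, so if `‖X0‖ ≤ 1/1000` then `|z1| ≤ 1/1000` for all time and the
weight `φ(z1(t-1))` of `A1` in the field stays below `1/1000`. As long as `|x| ≤ 1`, the
perturbation this weight and the factor `1 + |x|²` cause costs at most a tenth of the decay of
`lyap` along `A0`, whence `d/dt lyap ≤ -(c/52) lyap`. The sublevel set `{lyap < 6}`, contained in
`{|x| ≤ 1}`, therefore can never be left, `lyap (x t)` decays exponentially, and so does `X`.
-/

lemma phi_nonneg (s : ℝ) : 0 ≤ phi s := by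
  unfold phi; split_ifs <;> linarith

lemma phi_le_one (s : ℝ) : phi s ≤ 1 := by
  unfold phi; split_ifs <;> linarith

lemma phi_le_abs (s : ℝ) : phi s ≤ |s| := by
  unfold phi
  split_ifs with h₀ h₁
  · positivity
  · exact le_abs_self s
  · rw [abs_of_nonneg (not_lt.1 h₀)]; linarith

lemma E2.norm_sq_eq (y : E2) : ‖y‖ ^ 2 = y 0 ^ 2 + y 1 ^ 2 := by
  simp [EuclideanSpace.real_norm_sq_eq, Fin.sum_univ_two]

lemma act_apply_zero (A : Matrix (Fin 2) (Fin 2) ℝ) (y : E2) :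
    act A y 0 = A 0 0 * y 0 + A 0 1 * y 1 := by
  simp [act, Matrix.mulVec, dotProduct, Fin.sum_univ_two]

lemma act_apply_one (A : Matrix (Fin 2) (Fin 2) ℝ) (y : E2) :
    act A y 1 = A 1 0 * y 0 + A 1 1 * y 1 := by
  simp [act, Matrix.mulVec, dotProduct, Fin.sum_univ_two]

lemma act_smul_add_smul (a b : ℝ) (A B : Matrix (Fin 2) (Fin 2) ℝ) (y : E2) :
    act (a • A + b • B) y = a • act A y + b • act B y := by
  simp [act, map_add, map_smul]

lemma antitoneOn_mul_exp_of_deriv_le {D : Set ℝ} (hD : Convex ℝ D) {V dV : ℝ → ℝ} {a : ℝ}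
    (hc : ContinuousOn V D) (hd : ∀ t ∈ interior D, HasDerivAt V (dV t) t)
    (hle : ∀ t ∈ interior D, dV t ≤ -a * V t) :
    AntitoneOn (fun t => V t * Real.exp (a * t)) D := by
  refine antitoneOn_of_hasDerivWithinAt_nonpos hD
    (hc.mul (by fun_prop)) (fun t ht => ?_) (f' := fun t => (dV t + a * V t) * Real.exp (a * t))
    (fun t ht => mul_nonpos_of_nonpos_of_nonneg (by linarith [hle t ht]) (Real.exp_pos _).le)
  have hexp : HasDerivAt (fun s => Real.exp (a * s)) (Real.exp (a * t) * a) t :=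
    ((hasDerivAt_id t).const_mul a).exp.congr_deriv (by simp)
  exact ((hd t ht).mul hexp).hasDerivWithinAt.congr_deriv (by ring)

lemma eq_mul_exp_neg_of_hasDerivAt {z : ℝ → ℝ} (hc : ContinuousOn z (Ici 0))
    (hd : ∀ t > 0, HasDerivAt z (-z t) t) {t : ℝ} (ht : 0 ≤ t) :
    z t = z 0 * Real.exp (-t) := by
  -- both `z t * exp t` and `-z t * exp t` are antitone
  have hD : interior (Ici (0 : ℝ)) = Ioi 0 := interior_Ici
  have hle := antitoneOn_mul_exp_of_deriv_le (convex_Ici 0) hc (a := 1)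
    (by rw [hD]; exact hd) (by simp)
  have hge := antitoneOn_mul_exp_of_deriv_le (convex_Ici 0) hc.neg (a := 1)
    (by rw [hD]; exact fun s hs => (hd s hs).neg) (by simp)
  have h₁ := hle self_mem_Ici ht ht
  have h₂ := hge self_mem_Ici ht ht
  simp only [Pi.neg_apply, mul_zero, Real.exp_zero, mul_one, one_mul] at h₁ h₂
  rw [Real.exp_neg, eq_mul_inv_iff_mul_eq₀ (Real.exp_pos t).ne']
  linarith

lemma le_mul_exp_of_deriv_le_of_lt {V dV : ℝ → ℝ} {a R : ℝ} (ha : 0 ≤ a)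
    (hc : ContinuousOn V (Ici 0)) (hd : ∀ t > 0, HasDerivAt V (dV t) t)
    (h₀ : 0 ≤ V 0) (hR : V 0 < R) (hle : ∀ t > 0, V t < R → dV t ≤ -a * V t)
    {t : ℝ} (ht : 0 ≤ t) : V t ≤ V 0 * Real.exp (-a * t) := by
  have hdecay : ∀ T ≥ 0, (∀ s ∈ Ioo 0 T, V s < R) → V T ≤ V 0 * Real.exp (-a * T) := by
    intro T hT hlt
    have hanti := antitoneOn_mul_exp_of_deriv_le (convex_Icc 0 T) (hc.mono Icc_subset_Ici_self)
      (by rw [interior_Icc]; exact fun s hs => hd s hs.1)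
      (by rw [interior_Icc]; exact fun s hs => hle s hs.1 (hlt s hs))
      (left_mem_Icc.2 hT) (right_mem_Icc.2 hT) hT
    simp only [mul_zero, Real.exp_zero, mul_one] at hanti
    rwa [neg_mul, Real.exp_neg, ← div_eq_mul_inv, le_div_iff₀ (Real.exp_pos _)]
  -- at the first time `V` reaches `R`, the decay up to that time would already give `V < R`
  suffices hlt : ∀ s ≥ 0, V s < R from hdecay t ht fun s hs => hlt s hs.1.le
  by_contra! hbad
  set S := Ici 0 ∩ V ⁻¹' Ici R
  have hS : S.Nonempty := hbad
  have hbdd : BddBelow S := ⟨0, fun s hs => hs.1⟩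
  have hmem : sInf S ∈ S :=
    (hc.preimage_isClosed_of_isClosed isClosed_Ici isClosed_Ici).csInf_mem hS hbdd
  have hbefore : ∀ s ∈ Ioo 0 (sInf S), V s < R := fun s hs =>
    not_le.1 fun hR' => (csInf_le hbdd ⟨hs.1.le, hR'⟩).not_gt hs.2
  have hdec := hdecay _ hmem.1 hbefore
  have hexp : Real.exp (-a * sInf S) ≤ 1 :=
    Real.exp_le_one_iff.2 (by nlinarith [show (0:ℝ) ≤ sInf S from hmem.1])
  nlinarith [show R ≤ V (sInf S) from hmem.2]

/-- `yᵀ P y` for `P = !![25, -1; -1, 6.3]`, the solution of `A0ᵀ P + P A0 = -1`. -/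
noncomputable def lyap (y : E2) : ℝ := 25 * y 0 ^ 2 - 2 * (y 0 * y 1) + 63 / 10 * y 1 ^ 2

noncomputable def lyapDeriv (y v : E2) : ℝ :=
  50 * y 0 * v 0 - 2 * (v 0 * y 1 + y 0 * v 1) + 63 / 5 * y 1 * v 1

lemma continuous_lyap : Continuous lyap := by
  unfold lyap; fun_prop

lemma HasDerivAt.lyap {x : ℝ → E2} {v : E2} {t : ℝ} (h : HasDerivAt x v t) :
    HasDerivAt (fun s => lyap (x s)) (lyapDeriv (x t) v) t := by
  have h₀ : HasDerivAt (fun s => x s 0) (v 0) t :=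
    (EuclideanSpace.proj (0 : Fin 2) : E2 →L[ℝ] ℝ).hasFDerivAt.comp_hasDerivAt t h
  have h₁ : HasDerivAt (fun s => x s 1) (v 1) t :=
    (EuclideanSpace.proj (1 : Fin 2) : E2 →L[ℝ] ℝ).hasFDerivAt.comp_hasDerivAt t h
  exact ((((h₀.pow 2).const_mul 25).sub ((h₀.mul h₁).const_mul 2)).add
    ((h₁.pow 2).const_mul (63 / 10))).congr_deriv (by simp only [lyapDeriv]; push_cast; ring)

lemma six_mul_norm_sq_le_lyap (y : E2) : 6 * ‖y‖ ^ 2 ≤ lyap y := by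
  rw [E2.norm_sq_eq, lyap]
  nlinarith [sq_nonneg (4 * y 0 - y 1)]

lemma lyap_le_mul_norm_sq (y : E2) : lyap y ≤ 26 * ‖y‖ ^ 2 := by
  rw [E2.norm_sq_eq, lyap]
  nlinarith [sq_nonneg (y 0 + y 1)]

lemma lyapDeriv_add (y v w : E2) : lyapDeriv y (v + w) = lyapDeriv y v + lyapDeriv y w := by
  simp only [lyapDeriv, PiLp.add_apply]; ring

lemma lyapDeriv_smul (y v : E2) (a : ℝ) : lyapDeriv y (a • v) = a * lyapDeriv y v := by
  simp only [lyapDeriv, PiLp.smul_apply, smul_eq_mul]; ring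

lemma lyapDeriv_act_A0 (y : E2) : lyapDeriv y (act A0 y) = -‖y‖ ^ 2 := by
  simp only [lyapDeriv, act_apply_zero, act_apply_one, E2.norm_sq_eq, A0]
  norm_num
  ring

lemma lyapDeriv_act_A1_le (y : E2) : lyapDeriv y (act A1 y) ≤ 49 * ‖y‖ ^ 2 := by
  simp only [lyapDeriv, act_apply_zero, act_apply_one, E2.norm_sq_eq, A1]
  norm_num
  nlinarith [sq_nonneg (y 0 - y 1), sq_nonneg (y 0), sq_nonneg (y 1)]

lemma lyapDeriv_field_le {c q w : ℝ} {y : E2} (hc : 0 ≤ c) (hq₀ : 0 ≤ q) (hq₁ : q ≤ 1)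
    (hw : phi w ≤ 1 / 1000) (hy : ‖y‖ ^ 2 ≤ 1) :
    lyapDeriv y ((c * q) • gfun y w + (c * (1 - q)) • act A0 y) ≤ -(c / 2) * ‖y‖ ^ 2 := by
  -- the left side is `-c W - c q W² + c q (1 + W) p (lyapDeriv y (act A1 y) + W)`
  simp only [gfun, act_smul_add_smul, lyapDeriv_add, lyapDeriv_smul, lyapDeriv_act_A0]
  set W := ‖y‖ ^ 2
  set p := phi w
  have hW : 0 ≤ W := by positivity
  have hp : 0 ≤ p := phi_nonneg w
  have h₁ : p * (lyapDeriv y (act A1 y) + W) ≤ W / 20 := by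
    nlinarith [mul_le_mul_of_nonneg_left (lyapDeriv_act_A1_le y) hp]
  have h₂ : (1 + W) * (p * (lyapDeriv y (act A1 y) + W)) ≤ W / 10 := by
    nlinarith [mul_le_mul_of_nonneg_left h₁ (by positivity : (0 : ℝ) ≤ 1 + W)]
  have h₃ : q * ((1 + W) * (p * (lyapDeriv y (act A1 y) + W))) ≤ W / 10 := by
    nlinarith [mul_le_mul_of_nonneg_left h₂ hq₀]
  nlinarith [mul_le_mul_of_nonneg_left h₃ hc, mul_nonneg (mul_nonneg hc hq₀) (sq_nonneg W)]

lemma norm_le_Xnorm (x : ℝ → E2) (z1 z2 : ℝ → ℝ) (t : ℝ) : ‖x t‖ ≤ Xnorm x z1 z2 t :=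
  (abs_of_nonneg (norm_nonneg _)).symm.le.trans
    (Real.abs_le_sqrt (by nlinarith [sq_nonneg (z1 t), sq_nonneg (z2 t)]))

lemma abs_z1_le_Xnorm (x : ℝ → E2) (z1 z2 : ℝ → ℝ) (t : ℝ) : |z1 t| ≤ Xnorm x z1 z2 t :=
  Real.abs_le_sqrt (by nlinarith [sq_nonneg ‖x t‖, sq_nonneg (z2 t)])

lemma abs_z2_le_Xnorm (x : ℝ → E2) (z1 z2 : ℝ → ℝ) (t : ℝ) : |z2 t| ≤ Xnorm x z1 z2 t :=
  Real.abs_le_sqrt (by nlinarith [sq_nonneg ‖x t‖, sq_nonneg (z1 t)])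

namespace IsSolution

variable {c : ℝ} {x : ℝ → E2} {z1 z2 : ℝ → ℝ}

lemma Xnorm_le_initNorm (hX : IsSolution c x z1 z2) {τ : ℝ} (hτ : τ ∈ Icc (-2) 0) :
    Xnorm x z1 z2 τ ≤ initNorm x z1 z2 := by
  obtain ⟨hx, hz1, hz2, -⟩ := hX
  have hcont : ContinuousOn (Xnorm x z1 z2) (Icc (-2) 0) := by
    unfold Xnorm
    exact Real.continuous_sqrt.comp_continuousOn
      ((((hx.mono Icc_subset_Ici_self).norm.pow 2).add
        ((hz1.mono Icc_subset_Ici_self).pow 2)).add ((hz2.mono Icc_subset_Ici_self).pow 2))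
  exact le_csSup (isCompact_Icc.image_of_continuousOn hcont).bddAbove (mem_image_of_mem _ hτ)

lemma initNorm_nonneg (hX : IsSolution c x z1 z2) : 0 ≤ initNorm x z1 z2 :=
  (Real.sqrt_nonneg _).trans (hX.Xnorm_le_initNorm ⟨by norm_num, le_rfl⟩)

lemma z1_eq (hX : IsSolution c x z1 z2) {t : ℝ} (ht : 0 ≤ t) : z1 t = z1 0 * Real.exp (-t) :=
  eq_mul_exp_neg_of_hasDerivAt (hX.2.1.mono (Ici_subset_Ici.2 (by norm_num)))
    (fun s hs => (hX.2.2.2 s hs).2.1) ht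

lemma z2_eq (hX : IsSolution c x z1 z2) {t : ℝ} (ht : 0 ≤ t) : z2 t = z2 0 * Real.exp (-t) :=
  eq_mul_exp_neg_of_hasDerivAt (hX.2.2.1.mono (Ici_subset_Ici.2 (by norm_num)))
    (fun s hs => (hX.2.2.2 s hs).2.2) ht

lemma abs_z1_le_initNorm (hX : IsSolution c x z1 z2) {τ : ℝ} (hτ : -2 ≤ τ) :
    |z1 τ| ≤ initNorm x z1 z2 := by
  have hz0 : |z1 0| ≤ initNorm x z1 z2 :=
    (abs_z1_le_Xnorm x z1 z2 0).trans (hX.Xnorm_le_initNorm ⟨by norm_num, le_rfl⟩)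
  rcases le_or_gt τ 0 with hτ₀ | hτ₀
  · exact (abs_z1_le_Xnorm x z1 z2 τ).trans (hX.Xnorm_le_initNorm ⟨hτ, hτ₀⟩)
  · rw [hX.z1_eq hτ₀.le, abs_mul, abs_of_pos (Real.exp_pos _)]
    exact (mul_le_of_le_one_right (abs_nonneg _) (Real.exp_le_one_iff.2 (by linarith))).trans hz0

theorem lyap_le (hc : 0 < c) (hX : IsSolution c x z1 z2) (hN : initNorm x z1 z2 ≤ 1 / 1000)
    {t : ℝ} (ht : 0 ≤ t) : lyap (x t) ≤ lyap (x 0) * Real.exp (-(c / 52) * t) := by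
  have hx0 : ‖x 0‖ ≤ initNorm x z1 z2 :=
    (norm_le_Xnorm x z1 z2 0).trans (hX.Xnorm_le_initNorm ⟨by norm_num, le_rfl⟩)
  refine le_mul_exp_of_deriv_le_of_lt (V := fun s => lyap (x s)) (R := 6) (by positivity)
    (continuous_lyap.comp_continuousOn (hX.1.mono (Ici_subset_Ici.2 (by norm_num))))
    (fun s hs => (hX.2.2.2 s hs).1.lyap) ?_ ?_ (fun s hs hs6 => ?_) ht
  · exact (mul_nonneg (by norm_num) (sq_nonneg _)).trans (six_mul_norm_sq_le_lyap _)
  · nlinarith [lyap_le_mul_norm_sq (x 0), norm_nonneg (x 0)]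
  · have hφ : phi (z1 (s - 1)) ≤ 1 / 1000 :=
      (phi_le_abs _).trans ((hX.abs_z1_le_initNorm (by linarith)).trans hN)
    have hy : ‖x s‖ ^ 2 ≤ 1 := by linarith [six_mul_norm_sq_le_lyap (x s)]
    nlinarith [lyapDeriv_field_le hc.le (phi_nonneg (z2 (s - 2))) (phi_le_one _) hφ hy,
      lyap_le_mul_norm_sq (x s)]

end IsSolution

/-- Local exponential stability of the origin of `(S_c)`: for every `c > 0` there are
`Δ, k, μ > 0` such that every solution with `‖X0‖ ≤ Δ` satisfies
`|X(t)| ≤ k ‖X0‖ e^{-μ t}` for all `t ≥ 0`. -/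
theorem stmt_3 (c : ℝ) (hc : 0 < c) :
    ∃ Δ k μ : ℝ, 0 < Δ ∧ 0 < k ∧ 0 < μ ∧
      ∀ (x : ℝ → E2) (z1 z2 : ℝ → ℝ), IsSolution c x z1 z2 →
        initNorm x z1 z2 ≤ Δ →
        ∀ t : ℝ, 0 ≤ t →
          Xnorm x z1 z2 t ≤ k * initNorm x z1 z2 * Real.exp (-μ * t) := by
  refine ⟨1 / 1000, 3, min (c / 104) 1, by norm_num, by norm_num, by positivity, ?_⟩
  intro x z1 z2 hX hN t ht
  set N := initNorm x z1 z2
  set μ := min (c / 104) 1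
  have hN₀ : 0 ≤ N := hX.initNorm_nonneg
  have hX0 : Xnorm x z1 z2 0 ≤ N := hX.Xnorm_le_initNorm ⟨by norm_num, le_rfl⟩
  have hdecay (r : ℝ) (hr : 2 * μ ≤ r) : Real.exp (-r * t) ≤ Real.exp (-μ * t) ^ 2 := by
    rw [← Real.exp_nat_mul]; exact Real.exp_le_exp.2 (by push_cast; nlinarith)
  have hx : 6 * ‖x t‖ ^ 2 ≤ 26 * N ^ 2 * Real.exp (-μ * t) ^ 2 := by
    have hx0 := (norm_le_Xnorm x z1 z2 0).trans hX0
    calc 6 * ‖x t‖ ^ 2 ≤ lyap (x 0) * Real.exp (-(c / 52) * t) :=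
          (six_mul_norm_sq_le_lyap _).trans (hX.lyap_le hc hN ht)
      _ ≤ 26 * N ^ 2 * Real.exp (-μ * t) ^ 2 := by
          gcongr
          · nlinarith [lyap_le_mul_norm_sq (x 0), norm_nonneg (x 0)]
          · exact hdecay _ (by linarith [min_le_left (c / 104) 1])
  have hz (z : ℝ → ℝ) (hz0 : |z 0| ≤ N) (hzt : z t = z 0 * Real.exp (-t)) :
      z t ^ 2 ≤ N ^ 2 * Real.exp (-μ * t) ^ 2 := by
    rw [hzt, mul_pow, ← sq_abs (z 0)]
    gcongr
    simpa [← Real.exp_nat_mul] using hdecay 2 (by linarith [min_le_right (c / 104) 1])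
  have hz1 := hz z1 ((abs_z1_le_Xnorm x z1 z2 0).trans hX0) (hX.z1_eq ht)
  have hz2 := hz z2 ((abs_z2_le_Xnorm x z1 z2 0).trans hX0) (hX.z2_eq ht)
  rw [Xnorm, Real.sqrt_le_iff]
  exact ⟨by positivity, by nlinarith⟩
end

section
/- There exist λ̄ ∈ (0,1) and constants K > 0, γ > 0 such that for every c > 0, all continuous functions μ1 : [0,∞) → [0, λ̄] and μ2 : [0,∞) → [0,1], and every differentiable function x : [0,∞) → ℝ² satisfying ẋ(t) = c μ2(t) (1+|x(t)|²) A_{μ1(t)} x(t) + c (1−μ2(t)) A0 x(t) for all t ≥ 0, one has |x(t)| ≤ K |x(0)| e^{−c γ t} for all t ≥ 0. -/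
/-!
The quadratic form `V(w) = wᵀ P w` with `P = !![25, -1; -1, 6.3]` is a Lyapunov function for
`A0`: `P` solves `A0ᵀ P + P A0 = -I`, so `V` decreases at rate `|x|²` along `ẋ = A0 x`.
Along `ẋ = A_λ x` the rate is `|x|²` minus a perturbation of size `O(λ)|x|²`, so for `λ ≤ 1/100`
it is still at least `|x|²/2`. The right-hand side of the equation is a combination of these two
vector fields with nonnegative coefficients, the first one at least `c μ2`, so with `V ≤ 26|x|²`
we get `V̇ ≤ -(c/52) V`; Grönwall and `5|x|² ≤ V` then give the estimate with `K = 3`,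
`γ = 1/104`.
-/

open Set Matrix

/-- Convex combination `A_λ = λ A1 + (1-λ) A0`. -/
noncomputable def Amat (l : ℝ) : Matrix (Fin 2) (Fin 2) ℝ := l • A1 + (1 - l) • A0

open Real

theorem le_mul_exp_of_hasDerivWithinAt_le_mul {f f' : ℝ → ℝ} {a K : ℝ}
    (hf : ∀ t ∈ Ici a, HasDerivWithinAt f (f' t) (Ici a) t)
    (bound : ∀ t ∈ Ici a, f' t ≤ K * f t) :
    ∀ t ∈ Ici a, f t ≤ f a * exp (K * (t - a)) := by
  intro t ht
  have hcont : ContinuousOn f (Icc a t) := fun s hs =>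
    (hf s hs.1).continuousWithinAt.mono Icc_subset_Ici_self
  have hright : ∀ s ∈ Ico a t, HasDerivWithinAt f (f' s) (Ici s) s := fun s hs =>
    (hf s hs.1).mono (Ici_subset_Ici.2 hs.1)
  have h := le_gronwallBound_of_liminf_deriv_right_le hcont
    (fun s hs _ hr => (hright s hs).liminf_right_slope_le hr) le_rfl
    (fun s hs => (bound s hs.1).trans_eq (add_zero _).symm) t ⟨ht, le_rfl⟩
  rwa [gronwallBound_ε0] at h

/-- The bilinear form `(w, v) ↦ wᵀ P v`, so that `V(w) = lyapForm w w`. -/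
noncomputable def lyapForm (w v : E2) : ℝ :=
  25 * w 0 * v 0 - (w 0 * v 1 + w 1 * v 0) + 63 / 10 * w 1 * v 1

theorem HasDerivWithinAt.lyapForm_self {x : ℝ → E2} {x' : E2} {s : Set ℝ} {t : ℝ}
    (hx : HasDerivWithinAt x x' s t) :
    HasDerivWithinAt (fun τ => lyapForm (x τ) (x τ)) (2 * lyapForm (x t) x') s t := by
  have hcoord (i : Fin 2) : HasDerivWithinAt (fun τ => x τ i) (x' i) s t :=
    (EuclideanSpace.proj (𝕜 := ℝ) i).hasFDerivAt.comp_hasDerivWithinAt t hx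
  have h0 := hcoord 0
  have h1 := hcoord 1
  exact (((h0.const_mul 25).mul h0).sub ((h0.mul h1).add (h1.mul h0)) |>.add
    ((h1.const_mul (63 / 10)).mul h1)).congr_deriv (by rw [lyapForm]; ring)

theorem lyapForm_smul_add_smul (w u v : E2) (a b : ℝ) :
    lyapForm w (a • u + b • v) = a * lyapForm w u + b * lyapForm w v := by
  simp only [lyapForm, PiLp.add_apply, PiLp.smul_apply, smul_eq_mul]
  ring

theorem norm_sq_eq_fin_two (w : E2) : ‖w‖ ^ 2 = w 0 ^ 2 + w 1 ^ 2 := by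
  simp [EuclideanSpace.norm_sq_eq, Fin.sum_univ_two]

theorem five_mul_norm_sq_le_lyapForm (w : E2) : 5 * ‖w‖ ^ 2 ≤ lyapForm w w := by
  rw [norm_sq_eq_fin_two, lyapForm]
  nlinarith [sq_nonneg (w 0 - w 1)]

theorem lyapForm_le_norm_sq (w : E2) : lyapForm w w ≤ 26 * ‖w‖ ^ 2 := by
  rw [norm_sq_eq_fin_two, lyapForm]
  nlinarith [sq_nonneg (w 0 + w 1)]

theorem act_apply (A : Matrix (Fin 2) (Fin 2) ℝ) (w : E2) (i : Fin 2) :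
    act A w i = A i 0 * w 0 + A i 1 * w 1 := by
  simp [act, Matrix.mulVec, dotProduct, Fin.sum_univ_two]

theorem lyapForm_act_A0 (w : E2) : lyapForm w (act A0 w) = -‖w‖ ^ 2 / 2 := by
  simp only [lyapForm, act_apply, norm_sq_eq_fin_two, A0]
  norm_num
  ring

theorem lyapForm_act_Amat (l : ℝ) (w : E2) :
    lyapForm w (act (Amat l) w) =
      -‖w‖ ^ 2 / 2 + l / 2 * (2 * w 0 ^ 2 + 939 / 10 * w 0 * w 1 - 426 / 100 * w 1 ^ 2) := by
  simp only [lyapForm, act_apply, norm_sq_eq_fin_two, Amat, A0, A1]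
  norm_num
  ring

theorem lyapForm_act_Amat_le {l : ℝ} (hl : l ∈ Icc (0 : ℝ) (1 / 100)) (w : E2) :
    lyapForm w (act (Amat l) w) ≤ -‖w‖ ^ 2 / 4 := by
  obtain ⟨hl0, hl1⟩ := hl
  have hpert : l * (2 * w 0 ^ 2 + 939 / 10 * w 0 * w 1 - 426 / 100 * w 1 ^ 2) ≤
      (w 0 ^ 2 + w 1 ^ 2) / 2 := by
    nlinarith [mul_nonneg hl0 (sq_nonneg (w 0 - w 1)), mul_nonneg hl0 (sq_nonneg (w 0 + w 1)),
      mul_nonneg (sub_nonneg.2 hl1) (sq_nonneg (w 0 + w 1)),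
      mul_nonneg (sub_nonneg.2 hl1) (sq_nonneg (w 0 - w 1))]
  rw [lyapForm_act_Amat, norm_sq_eq_fin_two]
  linarith

theorem two_mul_lyapForm_switched_le {c m l : ℝ} (hc : 0 < c) (hm : m ∈ Icc (0 : ℝ) 1)
    (hl : l ∈ Icc (0 : ℝ) (1 / 100)) (w : E2) :
    2 * lyapForm w ((c * m * (1 + ‖w‖ ^ 2)) • act (Amat l) w + (c * (1 - m)) • act A0 w) ≤
      -(c / 52) * lyapForm w w := by
  obtain ⟨hm0, hm1⟩ := hm
  rw [lyapForm_smul_add_smul, lyapForm_act_A0]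
  have hA := mul_le_mul_of_nonneg_left (lyapForm_act_Amat_le hl w)
    (by positivity : 0 ≤ c * m * (1 + ‖w‖ ^ 2))
  have hV := mul_le_mul_of_nonneg_left (lyapForm_le_norm_sq w) hc.le
  have hgain : 0 ≤ c * m * ‖w‖ ^ 2 * ‖w‖ ^ 2 := by positivity
  have hA0 : 0 ≤ c * (1 - m) * ‖w‖ ^ 2 := mul_nonneg (mul_nonneg hc.le (sub_nonneg.2 hm1)) (sq_nonneg _)
  nlinarith

/-- There are `λ̄ ∈ (0,1)`, `K > 0`, `γ > 0` such that for all `c > 0`, all continuous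
`μ1 : [0,∞) → [0,λ̄]`, `μ2 : [0,∞) → [0,1]`, every solution of
`ẋ = c μ2 (1+|x|²) A_{μ1} x + c (1-μ2) A0 x` satisfies `|x(t)| ≤ K |x(0)| e^{-cγt}`. -/
theorem stmt_4 :
    ∃ lbar K γ : ℝ, lbar ∈ Ioo (0 : ℝ) 1 ∧ 0 < K ∧ 0 < γ ∧
      ∀ c : ℝ, 0 < c →
      ∀ μ1 μ2 : ℝ → ℝ,
        ContinuousOn μ1 (Ici 0) → (∀ t : ℝ, 0 ≤ t → μ1 t ∈ Icc (0 : ℝ) lbar) →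
        ContinuousOn μ2 (Ici 0) → (∀ t : ℝ, 0 ≤ t → μ2 t ∈ Icc (0 : ℝ) 1) →
        ∀ x : ℝ → E2,
          (∀ t : ℝ, 0 ≤ t →
            HasDerivWithinAt x ((c * μ2 t * (1 + ‖x t‖ ^ 2)) • act (Amat (μ1 t)) (x t)
              + (c * (1 - μ2 t)) • act A0 (x t)) (Ici 0) t) →
          ∀ t : ℝ, 0 ≤ t → ‖x t‖ ≤ K * ‖x 0‖ * Real.exp (-(c * γ) * t) := by
  refine ⟨1 / 100, 3, 1 / 104, ⟨by norm_num, by norm_num⟩, by norm_num, by norm_num, ?_⟩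
  intro c hc μ1 μ2 _ hμ1 _ hμ2 x hx t ht
  have hV := le_mul_exp_of_hasDerivWithinAt_le_mul (fun τ hτ => (hx τ hτ).lyapForm_self)
    (fun τ hτ => two_mul_lyapForm_switched_le hc (hμ2 τ hτ) (hμ1 τ hτ) (x τ)) t ht
  have hexp : exp (-(c / 52) * (t - 0)) = exp (-(c * (1 / 104)) * t) ^ 2 := by
    rw [← exp_nat_mul]; ring_nf
  have hsq : ‖x t‖ ^ 2 ≤ (3 * ‖x 0‖ * exp (-(c * (1 / 104)) * t)) ^ 2 := by
    rw [hexp] at hV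
    nlinarith [five_mul_norm_sq_le_lyapForm (x t), lyapForm_le_norm_sq (x 0),
      mul_nonneg (sq_nonneg ‖x 0‖) (sq_nonneg (exp (-(c * (1 / 104)) * t)))]
  exact (pow_le_pow_iff_left₀ (norm_nonneg _) (by positivity) two_ne_zero).1 hsq
end
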